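/- Fix positive integers n, k, r, t with k ≤ r ≤ n and an index i₀ ∈ {1,…,t}, and fix bits b_j ∈ ZMod 2 for all j ≠ i₀ (known to the adversary). Let S be a uniformly random subset of Fin n of cardinality k and let b_{i₀} be uniform on ZMod 2, independent of S; conditionally on (S, b_{i₀}) let x_1, …, x_t be independent with x_j uniform on {x ∈ (ZMod 2)^n : ∑_{l∈S} x l = b_j}. Consider an adaptive query adversary that in each round j selects (as a function of previously observed values) a set Q_j ⊆ Fin n with |Q_j| = r, observes the restriction of x_j to Q_j, and finally outputs a guess in ZMod 2. Then the probability that the guess equals b_{i₀} is at most 1/2 + t · (r/n)^k. -/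

import Mathlib

/-!
The adversary's view depends only on the queried bits. If `S` is not contained in the query set
of round `i₀`, flipping one bit of `x_{i₀}` at a point of `S` outside that set leaves the view
unchanged and flips `b_{i₀}`, so on these inputs the guess is right exactly half of the time.
Otherwise let `i` be the first round whose query set contains `S`. Flipping bits of `S` outside
the query sets of the earlier rounds shows that, given the event "`S` is first hit in round `i`",
the parities of all rounds are uniform; so this event has probability at most
`(r choose k) / (n choose k) ≤ (r/n)^k`, and a union bound over `i` gives `t (r/n)^k`.
-/

open Finset

/-- Uniform distribution over the size-`k` subsets of `Fin n`. -/
noncomputable def keyPMF (n k : ℕ) (hkn : k ≤ n) :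
    PMF {T : Finset (Fin n) // T.card = k} :=
  letI : Nonempty {T : Finset (Fin n) // T.card = k} := by
    obtain ⟨T, -, hT⟩ := Finset.exists_subset_card_eq
      (s := (Finset.univ : Finset (Fin n))) (n := k) (by simpa using hkn)
    exact ⟨⟨T, hT⟩⟩
  PMF.uniformOfFintype _

lemma parityTuple_nonempty {n : ℕ} (t : ℕ) (S : Finset (Fin n)) (hS : S.Nonempty)
    (b : Fin t → ZMod 2) :
    (Finset.univ.filter fun xs : Fin t → Fin n → ZMod 2 =>
      ∀ i, ∑ j ∈ S, xs i j = b i).Nonempty := by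
  classical
  obtain ⟨j0, hj0⟩ := hS
  refine ⟨fun i j => if j = j0 then b i else 0, ?_⟩
  simp only [Finset.mem_filter, Finset.mem_univ, true_and]
  intro i
  rw [Finset.sum_ite_eq' S j0 fun _ => b i, if_pos hj0]

/-- The joint distribution of `t` independent database strings, each uniform
conditioned on the parity over `S` equalling the corresponding bit. -/
noncomputable def statePMF {n : ℕ} (t : ℕ) (S : Finset (Fin n)) (hS : S.Nonempty)
    (b : Fin t → ZMod 2) : PMF (Fin t → Fin n → ZMod 2) :=
  PMF.uniformOfFinset
    (Finset.univ.filter fun xs : Fin t → Fin n → ZMod 2 => ∀ i, ∑ j ∈ S, xs i j = b i)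
    (parityTuple_nonempty t S hS b)

/-- The messages produced by an `(r,t)`-compression strategy `f` on inputs `xs`:
`m i = f i (xs i) (m_1, …, m_{i-1})`. -/
def messages {n r t : ℕ}
    (f : (i : Fin t) → (Fin n → ZMod 2) → (Fin i → Fin (2 ^ r)) → Fin (2 ^ r))
    (xs : Fin t → Fin n → ZMod 2) : Fin t → Fin (2 ^ r)
  | i => f i (xs i) fun j => messages f xs ⟨j.1, j.2.trans i.2⟩
  termination_by i => i.1
  decreasing_by all_goals exact j.2

/-- The observations of an adaptive query adversary: in round `i` it chooses a query
set `q i` as a function of the values observed in previous rounds, and observes the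
restriction of `xs i` to that set (`some` on queried indices, `none` elsewhere). -/
def obs {n t : ℕ}
    (q : (i : Fin t) → (Fin i → (Fin n → Option (ZMod 2))) → Finset (Fin n))
    (xs : Fin t → Fin n → ZMod 2) : Fin t → Fin n → Option (ZMod 2)
  | i => fun l =>
      if l ∈ q i (fun j => obs q xs ⟨j.1, j.2.trans i.2⟩) then some (xs i l) else none
  termination_by i => i.1
  decreasing_by all_goals exact j.2

section Pivot

variable {α : Type*} [LinearOrder α]

def pivot (S : Finset α) (hS : S.Nonempty) (Q : Finset α) : α :=
  if h : (S \ Q).Nonempty then (S \ Q).min' h else S.min' hS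

lemma pivot_mem (S : Finset α) (hS : S.Nonempty) (Q : Finset α) : pivot S hS Q ∈ S := by
  unfold pivot
  split_ifs with h
  · exact (mem_sdiff.mp ((S \ Q).min'_mem h)).1
  · exact S.min'_mem hS

lemma pivot_notMem {S Q : Finset α} (hS : S.Nonempty) (h : ¬ S ⊆ Q) : pivot S hS Q ∉ Q := by
  have hne : (S \ Q).Nonempty := sdiff_nonempty.mpr h
  unfold pivot
  rw [dif_pos hne]
  exact (mem_sdiff.mp ((S \ Q).min'_mem hne)).2

end Pivot

def parity {n t : ℕ} (S : Finset (Fin n)) (xs : Fin t → Fin n → ZMod 2) : Fin t → ZMod 2 :=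
  fun j => ∑ l ∈ S, xs j l

section Queries

variable {n t : ℕ} (q : (i : Fin t) → (Fin i → (Fin n → Option (ZMod 2))) → Finset (Fin n))

def Qset (xs : Fin t → Fin n → ZMod 2) (i : Fin t) : Finset (Fin n) :=
  q i fun j => obs q xs ⟨j.1, j.2.trans i.2⟩

lemma obs_apply (xs : Fin t → Fin n → ZMod 2) (i : Fin t) :
    obs q xs i = fun l => if l ∈ Qset q xs i then some (xs i l) else none := by
  rw [obs]
  rfl

lemma Qset_congr {xs xs' : Fin t → Fin n → ZMod 2} {i : Fin t}
    (h : ∀ j < i, obs q xs j = obs q xs' j) : Qset q xs i = Qset q xs' i := by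
  unfold Qset
  congr 1
  funext j
  exact h _ j.2

lemma obs_congr {xs xs' : Fin t → Fin n → ZMod 2} {i : ℕ}
    (h : ∀ j : Fin t, j.1 < i → ∀ l ∈ Qset q xs j, xs j l = xs' j l) :
    ∀ j : Fin t, j.1 < i → obs q xs j = obs q xs' j := by
  intro j
  induction j using WellFoundedLT.induction with
  | _ j ih =>
    intro hj
    have hQ : Qset q xs j = Qset q xs' j :=
      Qset_congr q fun l hl => ih l hl (lt_trans hl hj)
    rw [obs_apply, obs_apply, ← hQ]
    funext l
    split_ifs with hl
    · rw [h j hj l hl]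
    · rfl

variable {S : Finset (Fin n)} (hS : S.Nonempty) (i : ℕ)

def shift (c : Fin t → ZMod 2) (xs : Fin t → Fin n → ZMod 2) : Fin t → Fin n → ZMod 2 :=
  fun j => xs j + Pi.single (if j.1 < i then pivot S hS (Qset q xs j) else S.min' hS) (c j)

variable {q hS i} {c : Fin t → ZMod 2} {xs : Fin t → Fin n → ZMod 2}

lemma parity_shift : parity S (shift q hS i c xs) = parity S xs + c := by
  funext j
  have hmem : (if j.1 < i then pivot S hS (Qset q xs j) else S.min' hS) ∈ S := by
    split_ifs
    exacts [pivot_mem S hS _, S.min'_mem hS]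
  simp only [parity, shift, Pi.add_apply, sum_add_distrib, sum_pi_single', if_pos hmem]

variable (hc : ∀ j : Fin t, j.1 < i → c j ≠ 0 → ¬ S ⊆ Qset q xs j)
include hc

lemma obs_shift : ∀ j : Fin t, j.1 < i → obs q (shift q hS i c xs) j = obs q xs j := by
  refine fun j hj => (obs_congr q (fun j hj l hl => ?_) j hj).symm
  simp only [shift, if_pos hj, Pi.add_apply]
  by_cases hcj : c j = 0
  · simp [hcj]
  · rw [Pi.single_eq_of_ne (ne_of_mem_of_not_mem hl (pivot_notMem hS (hc j hj hcj))), add_zero]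

lemma Qset_shift : ∀ j : Fin t, j.1 ≤ i → Qset q (shift q hS i c xs) j = Qset q xs j :=
  fun _ hj => Qset_congr q fun l hl => obs_shift hc l (lt_of_lt_of_le hl hj)

lemma shift_shift (c' : Fin t → ZMod 2) :
    shift q hS i c' (shift q hS i c xs) = shift q hS i (c + c') xs := by
  funext j
  simp only [shift]
  split_ifs with hj
  · rw [Qset_shift hc j hj.le, Pi.add_apply, Pi.single_add, add_assoc]
  · rw [Pi.add_apply, Pi.single_add, add_assoc]

end Queries

section Equidistribution

variable {n t : ℕ} {q : (i : Fin t) → (Fin i → (Fin n → Option (ZMod 2))) → Finset (Fin n)}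
  {S : Finset (Fin n)} (i : ℕ) (R : (Fin t → Fin n → ZMod 2) → Prop) [DecidablePred R]
  (hR : ∀ xs xs', (∀ j : Fin t, j.1 < i → obs q xs j = obs q xs' j) → R xs → R xs')
include hR

lemma card_filter_parity_eq_add (hS : S.Nonempty) (c : Fin t → ZMod 2)
    (hc : ∀ xs, R xs → ∀ j : Fin t, j.1 < i → c j ≠ 0 → ¬ S ⊆ Qset q xs j)
    (a : Fin t → ZMod 2) :
    #{xs | R xs ∧ parity S xs = a} = #{xs | R xs ∧ parity S xs = a + c} := by
  have hmaps : ∀ a xs, R xs ∧ parity S xs = a →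
      R (shift q hS i c xs) ∧ parity S (shift q hS i c xs) = a + c := fun a xs hxs =>
    ⟨hR _ _ (fun j hj => (obs_shift (hc xs hxs.1) j hj).symm) hxs.1,
      by rw [parity_shift, hxs.2]⟩
  have hinv : ∀ xs, R xs → shift q hS i c (shift q hS i c xs) = xs := by
    intro xs hxs
    rw [shift_shift (hc xs hxs), ZModModule.add_self]
    funext j
    simp [shift]
  refine card_nbij' (shift q hS i c) (shift q hS i c) (fun xs hxs => ?_) (fun xs hxs => ?_)
    (fun xs hxs => hinv xs (mem_filter.mp hxs).2.1) (fun xs hxs => hinv xs (mem_filter.mp hxs).2.1)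
  · simpa using hmaps a xs (by simpa using hxs)
  · simpa [add_assoc, ZModModule.add_self] using hmaps (a + c) xs (by simpa using hxs)

lemma two_pow_mul_card_filter_parity (hS : S.Nonempty)
    (hsub : ∀ xs, R xs → ∀ j : Fin t, j.1 < i → ¬ S ⊆ Qset q xs j) (a : Fin t → ZMod 2) :
    2 ^ t * #{xs | R xs ∧ parity S xs = a} = #{xs | R xs} := by
  have hfib : ∀ c, #{xs | R xs ∧ parity S xs = c} = #{xs | R xs ∧ parity S xs = a} := by
    intro c
    rw [card_filter_parity_eq_add i R hR hS (c - a) (fun xs hxs j hj _ => hsub xs hxs j hj) a,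
      add_sub_cancel]
  calc 2 ^ t * #{xs | R xs ∧ parity S xs = a}
      = ∑ c : Fin t → ZMod 2, #{xs | R xs ∧ parity S xs = c} := by simp [hfib]
    _ = #{xs | R xs} := by
      rw [card_eq_sum_card_fiberwise (f := parity S) (t := univ)
        (fun _ _ => mem_coe.mpr (mem_univ _))]
      simp only [filter_filter]

end Equidistribution

lemma two_pow_pow_eq_two_pow_mul {n : ℕ} (hn : 0 < n) (t : ℕ) : (2 ^ n) ^ t = 2 ^ t * (2 ^ (n - 1)) ^ t := by
  rw [← mul_pow, ← pow_succ', Nat.sub_add_cancel hn]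

section Counting

variable {n t : ℕ} {q : (i : Fin t) → (Fin i → (Fin n → Option (ZMod 2))) → Finset (Fin n)}

lemma card_filter_parity {S : Finset (Fin n)} (hS : S.Nonempty) (a : Fin t → ZMod 2) :
    #{xs : Fin t → Fin n → ZMod 2 | parity S xs = a} = (2 ^ (n - 1)) ^ t := by
  have h := two_pow_mul_card_filter_parity (q := fun _ _ => ∅) 0 (fun _ => True)
    (fun _ _ _ _ => trivial) hS (fun _ _ _ hj => absurd hj (Nat.not_lt_zero _)) a
  simp only [true_and, filter_true, card_univ, Fintype.card_pi, Fintype.card_fin, ZMod.card,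
    prod_const] at h
  obtain ⟨l, -⟩ := hS
  rw [two_pow_pow_eq_two_pow_mul l.pos] at h
  exact Nat.eq_of_mul_eq_mul_left (by positivity) h

lemma sum_card_filter_guess_not_subset_le {S : Finset (Fin n)} (hS : S.Nonempty)
    (b : Fin t → ZMod 2) (i₀ : Fin t) (g : (Fin t → Fin n → Option (ZMod 2)) → ZMod 2) :
    ∑ β : ZMod 2, #{xs | (g (obs q xs) = β ∧ ¬ S ⊆ Qset q xs i₀) ∧
      parity S xs = Function.update b i₀ β} ≤ (2 ^ (n - 1)) ^ t := by
  have hflip : ∀ β, #{xs | (g (obs q xs) = β ∧ ¬ S ⊆ Qset q xs i₀) ∧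
      parity S xs = Function.update b i₀ β} = #{xs | (g (obs q xs) = β ∧ ¬ S ⊆ Qset q xs i₀) ∧
      parity S xs = Function.update b i₀ 0} := by
    intro β
    have hupd : Function.update b i₀ 0 + Pi.single i₀ β = Function.update b i₀ β := by
      funext j
      by_cases hj : j = i₀ <;> simp [hj]
    rw [card_filter_parity_eq_add (q := q) t (fun xs => g (obs q xs) = β ∧ ¬ S ⊆ Qset q xs i₀) ?_
      hS (Pi.single i₀ β) ?_ (Function.update b i₀ 0), hupd]
    · intro xs xs' h hxs
      rwa [← funext fun j => h j j.2, ← Qset_congr q fun j _ => h j j.2]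
    · intro xs hxs j _ hcj
      rw [Pi.single_apply] at hcj
      split_ifs at hcj with hj
      · exact hj ▸ hxs.2
      · exact absurd rfl hcj
  calc ∑ β : ZMod 2, #{xs | (g (obs q xs) = β ∧ ¬ S ⊆ Qset q xs i₀) ∧
        parity S xs = Function.update b i₀ β}
      = ∑ β : ZMod 2, #{xs ∈ {xs | ¬ S ⊆ Qset q xs i₀ ∧ parity S xs = Function.update b i₀ 0} |
          g (obs q xs) = β} := by
        refine sum_congr rfl fun β _ => ?_
        rw [hflip, filter_filter]
        congr 1
        ext xs
        simp only [mem_filter, mem_univ, true_and]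
        tauto
    _ = #{xs | ¬ S ⊆ Qset q xs i₀ ∧ parity S xs = Function.update b i₀ 0} :=
        (card_eq_sum_card_fiberwise fun _ _ => mem_coe.mpr (mem_univ _)).symm
    _ ≤ #{xs | parity S xs = Function.update b i₀ 0} :=
        card_le_card (monotone_filter_right _ fun _ _ h => h.2)
    _ = (2 ^ (n - 1)) ^ t := card_filter_parity hS _

def FirstHit (q : (i : Fin t) → (Fin i → (Fin n → Option (ZMod 2))) → Finset (Fin n))
    (S : Finset (Fin n)) (i : Fin t) (xs : Fin t → Fin n → ZMod 2) : Prop :=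
  S ⊆ Qset q xs i ∧ ∀ j < i, ¬ S ⊆ Qset q xs j

instance (S : Finset (Fin n)) (i : Fin t) : DecidablePred (FirstHit q S i) :=
  fun _ => inferInstanceAs (Decidable (_ ∧ _))

lemma card_filter_subset_Qset_le (S : Finset (Fin n)) (i₀ : Fin t) (a : Fin t → ZMod 2) :
    #{xs | S ⊆ Qset q xs i₀ ∧ parity S xs = a}
      ≤ ∑ i : Fin t, #{xs | FirstHit q S i xs ∧ parity S xs = a} := by
  refine (card_le_card fun xs hxs => ?_).trans card_biUnion_le
  simp only [mem_filter, mem_univ, true_and, mem_biUnion] at hxs ⊢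
  have hne : (univ.filter fun j => S ⊆ Qset q xs j).Nonempty := ⟨i₀, by simpa using hxs.1⟩
  refine ⟨_, ⟨by simpa using min'_mem _ hne, fun j hj hsub => ?_⟩, hxs.2⟩
  exact absurd (min'_le _ j (by simpa using hsub)) (not_le.mpr hj)

lemma sum_card_filter_firstHit_le {k r : ℕ} (hk : 0 < k) (hq : ∀ i h, (q i h).card = r)
    (i : Fin t) (a : Fin t → ZMod 2) :
    ∑ T ∈ powersetCard k univ, #{xs | FirstHit q T i xs ∧ parity T xs = a}
      ≤ r.choose k * (2 ^ (n - 1)) ^ t := by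
  rcases Nat.eq_zero_or_pos n with rfl | hn
  · rw [powersetCard_eq_empty.mpr (by simpa using hk)]
    simp
  refine Nat.le_of_mul_le_mul_left ?_ (by positivity : 0 < 2 ^ t)
  calc 2 ^ t * ∑ T ∈ powersetCard k univ, #{xs | FirstHit q T i xs ∧ parity T xs = a}
      = ∑ T ∈ powersetCard k univ, #{xs | FirstHit q T i xs} := by
        rw [mul_sum]
        refine sum_congr rfl fun T hT => two_pow_mul_card_filter_parity i.1 _ ?_
          (card_pos.mp ((mem_powersetCard.mp hT).2 ▸ hk)) (fun xs h j hj => h.2 j hj) a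
        intro xs xs' h hxs
        have hQ : ∀ j ≤ i, Qset q xs j = Qset q xs' j :=
          fun j hj => Qset_congr q fun l hl => h l (lt_of_lt_of_le hl hj)
        exact ⟨hQ i le_rfl ▸ hxs.1, fun j hj => hQ j hj.le ▸ hxs.2 j hj⟩
    _ ≤ ∑ T ∈ powersetCard k univ, #{xs | T ⊆ Qset q xs i} :=
        sum_le_sum fun T _ => card_le_card (monotone_filter_right _ fun _ _ h => h.1)
    _ = ∑ xs : Fin t → Fin n → ZMod 2, #{T ∈ powersetCard k univ | T ⊆ Qset q xs i} :=
        sum_card_bipartiteAbove_eq_sum_card_bipartiteBelow _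
    _ = 2 ^ t * (r.choose k * (2 ^ (n - 1)) ^ t) := by
        have hcount : ∀ xs, #{T ∈ powersetCard k univ | T ⊆ Qset q xs i} = r.choose k := by
          intro xs
          have : {T ∈ powersetCard k (univ : Finset (Fin n)) | T ⊆ Qset q xs i}
              = powersetCard k (Qset q xs i) := by
            ext T
            simp only [mem_filter, mem_powersetCard, subset_univ, true_and]
            tauto
          rw [this, card_powersetCard, Qset, hq]
        simp only [hcount, sum_const, card_univ, Fintype.card_pi, Fintype.card_fin, ZMod.card,
          prod_const, smul_eq_mul, two_pow_pow_eq_two_pow_mul hn]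
        ring

lemma sum_card_filter_guess_le {k r : ℕ} (hk : 0 < k) (hq : ∀ i h, (q i h).card = r)
    (b : Fin t → ZMod 2) (i₀ : Fin t) (g : (Fin t → Fin n → Option (ZMod 2)) → ZMod 2) :
    ∑ T ∈ powersetCard k univ, ∑ β : ZMod 2,
        #{xs | g (obs q xs) = β ∧ parity T xs = Function.update b i₀ β}
      ≤ n.choose k * (2 ^ (n - 1)) ^ t + 2 * (t * (r.choose k * (2 ^ (n - 1)) ^ t)) := by
  have hgood : ∑ T ∈ powersetCard k univ, ∑ β : ZMod 2,
      #{xs | (g (obs q xs) = β ∧ ¬ T ⊆ Qset q xs i₀) ∧ parity T xs = Function.update b i₀ β}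
        ≤ n.choose k * (2 ^ (n - 1)) ^ t :=
    calc _ ≤ ∑ _T ∈ powersetCard k (univ : Finset (Fin n)), (2 ^ (n - 1)) ^ t :=
          sum_le_sum fun T hT => sum_card_filter_guess_not_subset_le
            (card_pos.mp ((mem_powersetCard.mp hT).2 ▸ hk)) b i₀ g
      _ = _ := by simp
  have hbad : ∑ β : ZMod 2, ∑ T ∈ powersetCard k univ,
      #{xs | T ⊆ Qset q xs i₀ ∧ parity T xs = Function.update b i₀ β}
        ≤ 2 * (t * (r.choose k * (2 ^ (n - 1)) ^ t)) :=
    calc _ ≤ ∑ β : ZMod 2, ∑ i : Fin t, ∑ T ∈ powersetCard k univ,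
            #{xs | FirstHit q T i xs ∧ parity T xs = Function.update b i₀ β} := by
          refine sum_le_sum fun β _ => ?_
          rw [sum_comm]
          exact sum_le_sum fun T _ => card_filter_subset_Qset_le T i₀ _
      _ ≤ ∑ _β : ZMod 2, ∑ _i : Fin t, r.choose k * (2 ^ (n - 1)) ^ t :=
          sum_le_sum fun _ _ => sum_le_sum fun i _ => sum_card_filter_firstHit_le hk hq i _
      _ = _ := by simp
  calc _ ≤ ∑ T ∈ powersetCard k univ, ∑ β : ZMod 2,
          (#{xs | (g (obs q xs) = β ∧ ¬ T ⊆ Qset q xs i₀) ∧ parity T xs = Function.update b i₀ β}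
            + #{xs | T ⊆ Qset q xs i₀ ∧ parity T xs = Function.update b i₀ β}) := by
        refine sum_le_sum fun T _ => sum_le_sum fun β _ => ?_
        refine (card_le_card fun xs hxs => ?_).trans (card_union_le _ _)
        simp only [mem_union, mem_filter, mem_univ, true_and] at hxs ⊢
        tauto
    _ = _ := by
        simp only [sum_add_distrib]
        exact congrArg _ sum_comm
    _ ≤ _ := add_le_add hgood hbad

end Counting

lemma descFactorial_mul_pow_le {k r n : ℕ} (hkr : k ≤ r) (hrn : r ≤ n) :
    r.descFactorial k * n ^ k ≤ n.descFactorial k * r ^ k := by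
  induction k with
  | zero => simp
  | succ k ih =>
    have hstep : (r - k) * n ≤ (n - k) * r := by
      rw [Nat.sub_mul, Nat.sub_mul, mul_comm n r]
      exact Nat.sub_le_sub_left (Nat.mul_le_mul_left k hrn) _
    calc r.descFactorial (k + 1) * n ^ (k + 1)
        = ((r - k) * n) * (r.descFactorial k * n ^ k) := by
          rw [Nat.descFactorial_succ, pow_succ]; ring
      _ ≤ ((n - k) * r) * (n.descFactorial k * r ^ k) := Nat.mul_le_mul hstep (ih (by omega))
      _ = n.descFactorial (k + 1) * r ^ (k + 1) := by
          rw [Nat.descFactorial_succ, pow_succ]; ring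

lemma choose_mul_pow_le {k r n : ℕ} (hkr : k ≤ r) (hrn : r ≤ n) :
    r.choose k * n ^ k ≤ n.choose k * r ^ k := by
  have h := descFactorial_mul_pow_le hkr hrn
  rw [Nat.descFactorial_eq_factorial_mul_choose, Nat.descFactorial_eq_factorial_mul_choose,
    mul_assoc, mul_assoc] at h
  exact Nat.le_of_mul_le_mul_left h (Nat.factorial_pos k)

open scoped ENNReal in
lemma toOuterMeasure_guess_eq (n k r t : ℕ) (hk : 0 < k)
    (hkr : k ≤ r) (hrn : r ≤ n) (i₀ : Fin t)
    (b : Fin t → ZMod 2)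
    (q : (i : Fin t) → (Fin i → (Fin n → Option (ZMod 2))) → Finset (Fin n))
    (g : (Fin t → Fin n → Option (ZMod 2)) → ZMod 2) :
    (((keyPMF n k (hkr.trans hrn)).bind fun S =>
        (PMF.uniformOfFintype (ZMod 2)).bind fun β =>
          (statePMF t S.1 (Finset.card_pos.mp (by rw [S.2]; exact hk))
              (Function.update b i₀ β)).map fun xs => (S, β, xs)).toOuterMeasure
      {p : {T : Finset (Fin n) // T.card = k} × ZMod 2 × (Fin t → Fin n → ZMod 2) |
        g (obs q p.2.2) = p.2.1})
      = ((∑ T ∈ powersetCard k univ, ∑ β : ZMod 2,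
          #{xs | g (obs q xs) = β ∧ parity T xs = Function.update b i₀ β} : ℕ) : ℝ≥0∞)
            * ((n.choose k : ℝ≥0∞)⁻¹ * (2⁻¹ * (((2 ^ (n - 1)) ^ t : ℕ) : ℝ≥0∞)⁻¹)) := by
  simp_rw [Nat.cast_sum, sum_mul]
  rw [PMF.toOuterMeasure_bind_apply, tsum_fintype,
    sum_subtype (p := fun T : Finset (Fin n) => T.card = k) (powersetCard k univ)
      (fun T => by simp [mem_powersetCard])]
  refine sum_congr rfl fun S _ => ?_
  simp only [PMF.toOuterMeasure_bind_apply, tsum_fintype, PMF.toOuterMeasure_map_apply, statePMF,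
    PMF.toOuterMeasure_uniformOfFinset_apply, keyPMF, PMF.uniformOfFintype_apply,
    Fintype.card_finset_len]
  have hS : S.1.Nonempty := card_pos.mp (by rw [S.2]; exact hk)
  rw [mul_sum]
  refine sum_congr rfl fun β _ => ?_
  have hΩ : #{xs : Fin t → Fin n → ZMod 2 | ∀ i, ∑ j ∈ S.1, xs i j = Function.update b i₀ β i}
      = (2 ^ (n - 1)) ^ t := by
    rw [← card_filter_parity hS (Function.update b i₀ β)]
    simp only [parity, funext_iff]
  -- Stated for an arbitrary `W`, since the filter produced by
  -- `toOuterMeasure_uniformOfFinset_apply` carries a classical decidability instance.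
  have hW : ∀ W : Finset (Fin t → Fin n → ZMod 2),
      (∀ xs, xs ∈ W ↔ g (obs q xs) = β ∧ parity S.1 xs = Function.update b i₀ β) →
      ((n.choose k : ℝ≥0∞))⁻¹ * ((2 : ℕ) : ℝ≥0∞)⁻¹ * (#W / (((2 ^ (n - 1)) ^ t : ℕ) : ℝ≥0∞))
        = #{xs | g (obs q xs) = β ∧ parity S.1 xs = Function.update b i₀ β}
          * ((n.choose k : ℝ≥0∞)⁻¹ * (2⁻¹ * (((2 ^ (n - 1)) ^ t : ℕ) : ℝ≥0∞)⁻¹)) := by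
    intro W hW
    obtain rfl : W = ({xs | g (obs q xs) = β ∧ parity S.1 xs = Function.update b i₀ β} :
        Finset (Fin t → Fin n → ZMod 2)) := by
      ext xs
      simpa using hW xs
    rw [div_eq_mul_inv]
    push_cast
    ring
  rw [hΩ, Fintype.card_fin, ZMod.card, ← mul_assoc]
  exact hW _ fun xs => by simp [parity, funext_iff, and_comm]

open scoped ENNReal in
/-- An adaptive index-query adversary who knows Alice's bits at all
times other than `i₀` and queries `r` indices per period guesses the uniformly random
bit `b_{i₀}` with probability at most `1/2 + t (r/n)^k`. -/
theorem query_adversary_bit_security (n k r t : ℕ) (hk : 0 < k)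
    (hkr : k ≤ r) (hrn : r ≤ n) (i₀ : Fin t)
    (b : Fin t → ZMod 2)
    (q : (i : Fin t) → (Fin i → (Fin n → Option (ZMod 2))) → Finset (Fin n))
    (hq : ∀ i h, (q i h).card = r)
    (g : (Fin t → Fin n → Option (ZMod 2)) → ZMod 2) :
    (((keyPMF n k (hkr.trans hrn)).bind fun S =>
        (PMF.uniformOfFintype (ZMod 2)).bind fun β =>
          (statePMF t S.1 (Finset.card_pos.mp (by rw [S.2]; exact hk))
              (Function.update b i₀ β)).map fun xs => (S, β, xs)).toOuterMeasure
      {p : {T : Finset (Fin n) // T.card = k} × ZMod 2 × (Fin t → Fin n → ZMod 2) |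
        g (obs q p.2.2) = p.2.1})
      ≤ ENNReal.ofReal ((1 : ℝ) / 2 + (t : ℝ) * ((r : ℝ) / (n : ℝ)) ^ k) := by
  have hC : 0 < n.choose k := Nat.choose_pos (hkr.trans hrn)
  have hn : 0 < n := hk.trans_le (hkr.trans hrn)
  have hratio : (r.choose k : ℝ) / n.choose k ≤ ((r : ℝ) / n) ^ k := by
    rw [div_pow, div_le_div_iff₀ (by exact_mod_cast hC) (by positivity)]
    rw [mul_comm _ (n.choose k : ℝ)]
    exact_mod_cast choose_mul_pow_le hkr hrn
  have hcount : (∑ T ∈ powersetCard k univ, ∑ β : ZMod 2,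
      #{xs | g (obs q xs) = β ∧ parity T xs = Function.update b i₀ β} : ℝ)
      ≤ n.choose k * (2 ^ (n - 1)) ^ t + 2 * (t * (r.choose k * (2 ^ (n - 1)) ^ t)) := by
    exact_mod_cast sum_card_filter_guess_le hk hq b i₀ g
  rw [toOuterMeasure_guess_eq n k r t hk hkr hrn i₀ b q g,
    ENNReal.le_ofReal_iff_toReal_le (by simp [ENNReal.mul_eq_top, hC.ne']) (by positivity)]
  simp only [ENNReal.toReal_mul, ENNReal.toReal_inv, ENNReal.toReal_natCast, ENNReal.toReal_ofNat]
  calc _ ≤ (n.choose k * (2 ^ (n - 1)) ^ t + 2 * (t * (r.choose k * (2 ^ (n - 1)) ^ t)) : ℝ)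
        * ((n.choose k : ℝ)⁻¹ * (2⁻¹ * ((2 ^ (n - 1)) ^ t : ℝ)⁻¹)) := by
        push_cast at hcount ⊢
        gcongr
    _ = 1 / 2 + t * (r.choose k / n.choose k) := by
        field_simp
    _ ≤ _ := by gcongr
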